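/- arXiv:1807.05042 — 2 statements merged into one kernel-verified Lean document; each statement's English description precedes it below -/
import Mathlib

section
/- Let X, Y be Hilbert spaces, A, A_η : X → Y bounded with ‖A − A_η‖ ≤ η, α > 0, and x† ∈ X. Then α‖(A_η*A_η + αI)⁻¹ x†‖ ≤ η‖x†‖/√α + α‖(A*A + αI)⁻¹ x†‖. -/
/-!
Writing `T(A) = A*A + αI`, the resolvent identity gives
`T(Aη)⁻¹ - T(A)⁻¹ = T(Aη)⁻¹ ((A - Aη)* A + Aη* (A - Aη)) T(A)⁻¹`.
From `⟪T(A) x, x⟫ = ‖A x‖² + α‖x‖²` and Cauchy–Schwarz one gets `‖T(A)⁻¹‖ ≤ 1/α` and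
`‖A T(A)⁻¹‖ = ‖T(A)⁻¹ A*‖ ≤ 1/(2√α)`, so the difference of the inverses has norm at most
`η α^(-3/2)`; the theorem is this bound applied to `x†` and multiplied by `α`.
-/

open ContinuousLinearMap Filter

variable {X Y : Type*} [NormedAddCommGroup X] [InnerProductSpace ℝ X] [CompleteSpace X]
  [NormedAddCommGroup Y] [InnerProductSpace ℝ Y] [CompleteSpace Y]

open RealInnerProductSpace
open scoped Ring

noncomputable def tikhonovOp (A : X →L[ℝ] Y) (α : ℝ) : X →L[ℝ] X :=
  adjoint A ∘L A + α • 1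

section

variable (A : X →L[ℝ] Y) (α : ℝ)

lemma inner_tikhonovOp_apply_self (x : X) :
    ⟪tikhonovOp A α x, x⟫ = ‖A x‖ ^ 2 + α * ‖x‖ ^ 2 := by
  simp only [tikhonovOp, add_apply, comp_apply, smul_apply, one_apply_eq_self, inner_add_left,
    real_inner_smul_left, adjoint_inner_left, real_inner_self_eq_norm_sq]

lemma norm_sq_add_mul_norm_sq_le (x : X) :
    ‖A x‖ ^ 2 + α * ‖x‖ ^ 2 ≤ ‖tikhonovOp A α x‖ * ‖x‖ :=
  inner_tikhonovOp_apply_self A α x ▸ real_inner_le_norm _ _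

lemma isSelfAdjoint_tikhonovOp : IsSelfAdjoint (tikhonovOp A α) := by
  rw [isSelfAdjoint_iff', tikhonovOp, map_add, adjoint_comp, adjoint_adjoint, map_smul,
    ← star_eq_adjoint, star_one]

lemma mul_norm_le_norm_tikhonovOp_apply (x : X) : α * ‖x‖ ≤ ‖tikhonovOp A α x‖ := by
  rcases (norm_nonneg x).eq_or_lt' with hx | hx
  · rw [hx, mul_zero]
    exact norm_nonneg _
  · refine le_of_mul_le_mul_right ?_ hx
    nlinarith [norm_sq_add_mul_norm_sq_le A α x, sq_nonneg ‖A x‖]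

variable {α}

lemma isUnit_tikhonovOp (hα : 0 < α) : IsUnit (tikhonovOp A α) := by
  refine isUnit_of_forall_le_norm_inner_map _ (c := ⟨α, hα.le⟩) hα fun x => ?_
  rw [inner_tikhonovOp_apply_self, Real.norm_of_nonneg (by positivity)]
  change ‖x‖ ^ 2 * α ≤ _
  nlinarith [sq_nonneg ‖A x‖]

lemma tikhonovOp_inverse_apply (hα : 0 < α) (x : X) :
    tikhonovOp A α ((tikhonovOp A α)⁻¹ʳ x) = x := by
  rw [← mul_apply_eq_comp, Ring.mul_inverse_cancel _ (isUnit_tikhonovOp A hα), one_apply_eq_self]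

lemma norm_inverse_tikhonovOp_le (hα : 0 < α) : ‖(tikhonovOp A α)⁻¹ʳ‖ ≤ α⁻¹ := by
  refine opNorm_le_bound _ (by positivity) fun x => ?_
  have h := mul_norm_le_norm_tikhonovOp_apply A α ((tikhonovOp A α)⁻¹ʳ x)
  rw [tikhonovOp_inverse_apply A hα] at h
  rwa [inv_mul_eq_div, le_div_iff₀ hα, mul_comm]

lemma norm_comp_inverse_tikhonovOp_le (hα : 0 < α) :
    ‖A ∘L (tikhonovOp A α)⁻¹ʳ‖ ≤ (2 * √α)⁻¹ := by
  refine opNorm_le_bound _ (by positivity) fun x => ?_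
  set u := (tikhonovOp A α)⁻¹ʳ x
  have h := norm_sq_add_mul_norm_sq_le A α u
  rw [tikhonovOp_inverse_apply A hα] at h
  -- `4α(‖x‖‖u‖ - α‖u‖²) = ‖x‖² - (‖x‖ - 2α‖u‖)² ≤ ‖x‖²`
  have hsq : (2 * √α * ‖A u‖) ^ 2 ≤ ‖x‖ ^ 2 := by
    rw [mul_pow, mul_pow, Real.sq_sqrt hα.le]
    nlinarith [sq_nonneg (‖x‖ - 2 * α * ‖u‖)]
  rw [inv_mul_eq_div, le_div_iff₀ (by positivity), comp_apply, mul_comm]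
  exact le_of_pow_le_pow_left₀ two_ne_zero (norm_nonneg x) hsq

lemma norm_inverse_tikhonovOp_comp_adjoint_le (hα : 0 < α) :
    ‖(tikhonovOp A α)⁻¹ʳ ∘L adjoint A‖ ≤ (2 * √α)⁻¹ := by
  have hR : adjoint (tikhonovOp A α)⁻¹ʳ = (tikhonovOp A α)⁻¹ʳ :=
    ((isSelfAdjoint_tikhonovOp A α).ringInverse).adjoint_eq
  rw [← hR, ← adjoint_comp, LinearIsometryEquiv.norm_map]
  exact norm_comp_inverse_tikhonovOp_le A hα

end

lemma tikhonovOp_sub_tikhonovOp (A B : X →L[ℝ] Y) (α : ℝ) :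
    tikhonovOp A α - tikhonovOp B α = adjoint (A - B) ∘L A + adjoint B ∘L (A - B) := by
  simp only [tikhonovOp, map_sub, sub_comp, comp_sub]
  abel

lemma norm_inverse_tikhonovOp_sub_le {A Aη : X →L[ℝ] Y} {η α : ℝ} (hη : ‖A - Aη‖ ≤ η)
    (hα : 0 < α) : ‖(tikhonovOp Aη α)⁻¹ʳ - (tikhonovOp A α)⁻¹ʳ‖ ≤ η / (α * √α) := by
  set R := (tikhonovOp A α)⁻¹ʳ
  set Rη := (tikhonovOp Aη α)⁻¹ʳ
  have hdiff :
      Rη - R = Rη ∘L adjoint (A - Aη) ∘L (A ∘L R) + (Rη ∘L adjoint Aη) ∘L (A - Aη) ∘L R := by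
    rw [Ring.inverse_sub_inverse (iff_of_true (isUnit_tikhonovOp Aη hα) (isUnit_tikhonovOp A hα)),
      tikhonovOp_sub_tikhonovOp, mul_add]
    simp only [mul_def, add_comp, comp_assoc]
    rfl
  have hadj : ‖adjoint (A - Aη)‖ ≤ η := by rwa [LinearIsometryEquiv.norm_map]
  have hRη := norm_inverse_tikhonovOp_le Aη hα
  have hR := norm_inverse_tikhonovOp_le A hα
  have hAR := norm_comp_inverse_tikhonovOp_le A hα
  have hRηA := norm_inverse_tikhonovOp_comp_adjoint_le Aη hα
  have hη0 : 0 ≤ η := (norm_nonneg _).trans hη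
  calc ‖Rη - R‖
      ≤ ‖Rη‖ * (‖adjoint (A - Aη)‖ * ‖A ∘L R‖) + ‖Rη ∘L adjoint Aη‖ * (‖A - Aη‖ * ‖R‖) := by
        rw [hdiff]
        refine (norm_add_le _ _).trans (add_le_add ?_ ?_) <;>
          refine (opNorm_comp_le _ _).trans (mul_le_mul_of_nonneg_left (opNorm_comp_le _ _) ?_) <;>
          positivity
    _ ≤ α⁻¹ * (η * (2 * √α)⁻¹) + (2 * √α)⁻¹ * (η * α⁻¹) := by gcongr
    _ = η / (α * √α) := by field_simp; ring

theorem stmt_13 (A Aη : X →L[ℝ] Y) (η : ℝ) (hη : ‖A - Aη‖ ≤ η) (α : ℝ) (hα : 0 < α)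
    (xdag : X) :
    α * ‖(Ring.inverse (adjoint Aη ∘L Aη + α • (1 : X →L[ℝ] X))) xdag‖ ≤
      η * ‖xdag‖ / Real.sqrt α +
        α * ‖(Ring.inverse (adjoint A ∘L A + α • (1 : X →L[ℝ] X))) xdag‖ := by
  change α * ‖(tikhonovOp Aη α)⁻¹ʳ xdag‖ ≤ η * ‖xdag‖ / √α + α * ‖(tikhonovOp A α)⁻¹ʳ xdag‖
  set R := (tikhonovOp A α)⁻¹ʳ
  set Rη := (tikhonovOp Aη α)⁻¹ʳ
  have hdiff : ‖Rη xdag - R xdag‖ ≤ η / (α * √α) * ‖xdag‖ :=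
    ((Rη - R).le_opNorm xdag).trans <|
      mul_le_mul_of_nonneg_right (norm_inverse_tikhonovOp_sub_le hη hα) (norm_nonneg xdag)
  calc α * ‖Rη xdag‖
      ≤ α * (η / (α * √α) * ‖xdag‖ + ‖R xdag‖) := by
        gcongr
        linarith [norm_le_norm_add_norm_sub' (Rη xdag) (R xdag)]
    _ = η * ‖xdag‖ / √α + α * ‖R xdag‖ := by field_simp
end

section
/- Let X, Y be Hilbert spaces, A, A_η : X → Y bounded with ‖A − A_η‖ ≤ η, α > 0, y ∈ Y, y_δ ∈ Y with ‖y_δ − y‖ ≤ δ, and let x† ∈ X satisfy A x† = y. Define x_{α,δ,η} = (A_η*A_η + αI)⁻¹ A_η* y_δ. Then ‖x_{α,δ,η} − x†‖ ≤ ‖(A_η*A_η + αI)⁻¹ A_η*(y_δ − y)‖ + (η/(2√α))‖x†‖ + α‖(A_η*A_η + αI)⁻¹ x†‖. -/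
/-!
With `T = A_η* A_η + α` and `R = T⁻¹`, the identities `x† = R (T x†)` and `A x† = y` give
`R A_η* y_δ - x† = R A_η* (y_δ - y) + R A_η* (A - A_η) x† - α R x†`, and the triangle inequality
finishes once `‖R A_η* z‖ ≤ ‖z‖ / (2√α)`. For that bound put `u = R A_η* z`: then
`‖A_η u‖² + α‖u‖² = ⟪T u, u⟫ = ⟪z, A_η u⟫ ≤ ‖z‖ ‖A_η u‖`, and the left side is at least
`2√α ‖u‖ ‖A_η u‖` by AM-GM. The same coercivity makes `T` invertible (Lax-Milgram).
-/

open ContinuousLinearMap Filter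
open scoped RealInnerProductSpace

variable {X Y : Type*} [NormedAddCommGroup X] [InnerProductSpace ℝ X] [CompleteSpace X]
  [NormedAddCommGroup Y] [InnerProductSpace ℝ Y] [CompleteSpace Y]

section RingInverse

variable {R M : Type*} [Ring R] [TopologicalSpace M] [AddCommGroup M] [Module R M]
  {T : M →L[R] M}

lemma IsUnit.ringInverse_apply_apply (hT : IsUnit T) (x : M) : Ring.inverse T (T x) = x :=
  congr($(Ring.inverse_mul_cancel T hT) x)

lemma IsUnit.apply_ringInverse_apply (hT : IsUnit T) (x : M) : T (Ring.inverse T x) = x :=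
  congr($(Ring.mul_inverse_cancel T hT) x)

end RingInverse

lemma two_mul_sqrt_mul_le_of_sq_add_mul_sq_le {a b c α : ℝ} (hα : 0 ≤ α) (hc : 0 ≤ c)
    (h : a ^ 2 + α * b ^ 2 ≤ c * a) : 2 * √α * b ≤ c := by
  -- `α b² ≤ c a - a² ≤ c² / 4`
  have : (2 * √α * b) ^ 2 ≤ c ^ 2 := by nlinarith [sq_nonneg (c - 2 * a), Real.sq_sqrt hα]
  exact le_of_sq_le_sq this hc

lemma inner_adjoint_comp_add_smul_one_apply_self (A : X →L[ℝ] Y) (α : ℝ) (x : X) :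
    ⟪(adjoint A ∘L A + α • (1 : X →L[ℝ] X)) x, x⟫ = ‖A x‖ ^ 2 + α * ‖x‖ ^ 2 := by
  rw [add_apply, comp_apply, smul_apply, one_apply_eq_self, inner_add_left, real_inner_smul_left,
    adjoint_inner_left, real_inner_self_eq_norm_sq, real_inner_self_eq_norm_sq]

lemma isUnit_adjoint_comp_add_smul_one (A : X →L[ℝ] Y) {α : ℝ} (hα : 0 < α) :
    IsUnit (adjoint A ∘L A + α • (1 : X →L[ℝ] X)) := by
  refine isUnit_of_forall_le_norm_inner_map _ (c := α.toNNReal) (by simpa using hα) fun x ↦ ?_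
  rw [inner_adjoint_comp_add_smul_one_apply_self, Real.norm_of_nonneg (by positivity),
    Real.coe_toNNReal _ hα.le]
  nlinarith [sq_nonneg ‖A x‖]

lemma norm_ringInverse_adjoint_comp_add_smul_one_adjoint_apply_le (A : X →L[ℝ] Y) {α : ℝ}
    (hα : 0 < α) (z : Y) :
    ‖Ring.inverse (adjoint A ∘L A + α • (1 : X →L[ℝ] X)) (adjoint A z)‖ ≤ ‖z‖ / (2 * √α) := by
  set u := Ring.inverse (adjoint A ∘L A + α • (1 : X →L[ℝ] X)) (adjoint A z)
  have hu : (adjoint A ∘L A + α • (1 : X →L[ℝ] X)) u = adjoint A z :=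
    (isUnit_adjoint_comp_add_smul_one A hα).apply_ringInverse_apply _
  have hcoercive : ‖A u‖ ^ 2 + α * ‖u‖ ^ 2 ≤ ‖z‖ * ‖A u‖ := by
    rw [← inner_adjoint_comp_add_smul_one_apply_self, hu, adjoint_inner_left]
    exact real_inner_le_norm _ _
  rw [le_div_iff₀ (by positivity), mul_comm]
  exact two_mul_sqrt_mul_le_of_sq_add_mul_sq_le hα.le (norm_nonneg _) hcoercive

lemma ringInverse_adjoint_comp_add_smul_one_adjoint_apply_sub (A Aη : X →L[ℝ] Y) {α : ℝ}
    (hα : 0 < α) {x : X} {y : Y} (hx : A x = y) (yδ : Y) :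
    Ring.inverse (adjoint Aη ∘L Aη + α • (1 : X →L[ℝ] X)) (adjoint Aη yδ) - x =
      Ring.inverse (adjoint Aη ∘L Aη + α • (1 : X →L[ℝ] X)) (adjoint Aη (yδ - y)) +
        Ring.inverse (adjoint Aη ∘L Aη + α • (1 : X →L[ℝ] X)) (adjoint Aη ((A - Aη) x)) -
        α • Ring.inverse (adjoint Aη ∘L Aη + α • (1 : X →L[ℝ] X)) x := by
  set T := adjoint Aη ∘L Aη + α • (1 : X →L[ℝ] X) with hT
  have hTunit : IsUnit T := isUnit_adjoint_comp_add_smul_one Aη hα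
  have hsplit : adjoint Aη yδ =
      adjoint Aη (yδ - y) + adjoint Aη ((A - Aη) x) - α • x + T x := by
    simp only [hT, map_sub, sub_apply, hx, add_apply, comp_apply, smul_apply, one_apply_eq_self]
    abel
  rw [hsplit, map_add (Ring.inverse T), map_sub (Ring.inverse T), map_add (Ring.inverse T),
    map_smul, hTunit.ringInverse_apply_apply]
  abel

theorem stmt_14_general (A Aη : X →L[ℝ] Y) (η : ℝ) (hη : ‖A - Aη‖ ≤ η) (α : ℝ) (hα : 0 < α)
    (y yδ : Y) (xdag : X) (hx : A xdag = y) :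
    ‖(Ring.inverse (adjoint Aη ∘L Aη + α • (1 : X →L[ℝ] X))) (adjoint Aη yδ) - xdag‖ ≤
      ‖(Ring.inverse (adjoint Aη ∘L Aη + α • (1 : X →L[ℝ] X))) (adjoint Aη (yδ - y))‖ +
        η / (2 * Real.sqrt α) * ‖xdag‖ +
        α * ‖(Ring.inverse (adjoint Aη ∘L Aη + α • (1 : X →L[ℝ] X))) xdag‖ := by
  rw [ringInverse_adjoint_comp_add_smul_one_adjoint_apply_sub A Aη hα hx]
  set R := Ring.inverse (adjoint Aη ∘L Aη + α • (1 : X →L[ℝ] X))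
  have hperturb : ‖R (adjoint Aη ((A - Aη) xdag))‖ ≤ η / (2 * √α) * ‖xdag‖ := calc
    _ ≤ ‖(A - Aη) xdag‖ / (2 * √α) :=
      norm_ringInverse_adjoint_comp_add_smul_one_adjoint_apply_le Aη hα _
    _ ≤ η * ‖xdag‖ / (2 * √α) := by gcongr; exact (A - Aη).le_of_opNorm_le hη xdag
    _ = η / (2 * √α) * ‖xdag‖ := div_mul_eq_mul_div .. |>.symm
  calc _ ≤ ‖R (adjoint Aη (yδ - y))‖ + ‖R (adjoint Aη ((A - Aη) xdag))‖ + ‖α • R xdag‖ :=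
        norm_sub_le_of_le (norm_add_le _ _) le_rfl
    _ ≤ _ := by
      rw [norm_smul, Real.norm_of_nonneg hα.le]
      gcongr

theorem stmt_14 (A Aη : X →L[ℝ] Y) (η : ℝ) (hη : ‖A - Aη‖ ≤ η) (α : ℝ) (hα : 0 < α)
    (y yδ : Y) (δ : ℝ) (hδ : ‖yδ - y‖ ≤ δ) (xdag : X) (hx : A xdag = y) :
    ‖(Ring.inverse (adjoint Aη ∘L Aη + α • (1 : X →L[ℝ] X))) (adjoint Aη yδ) - xdag‖ ≤
      ‖(Ring.inverse (adjoint Aη ∘L Aη + α • (1 : X →L[ℝ] X))) (adjoint Aη (yδ - y))‖ +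
        η / (2 * Real.sqrt α) * ‖xdag‖ +
        α * ‖(Ring.inverse (adjoint Aη ∘L Aη + α • (1 : X →L[ℝ] X))) xdag‖ :=
  stmt_14_general A Aη η hη α hα y yδ xdag hx
end
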